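/- arXiv:1103.5233 — 4 statements merged into one kernel-verified Lean document; each statement's English description precedes it below -/
import Mathlib

section
/- Let f ∈ C²[a,b] be nonvanishing with 1/f bounded. The series Σ_{k=0}^∞ (λᵏ/(2k)!) X̃⁽²ᵏ⁾(x) and Σ_{k=0}^∞ (λᵏ/(2k+1)!) X⁽²ᵏ⁺¹⁾(x) converge uniformly on [a,b] for every λ ∈ ℂ. In particular, there is a constant C (depending on sup|f|², sup|f|⁻²) such that |X̃⁽ⁿ⁾(x)| ≤ Cⁿ |x - x₀|ⁿ and |X⁽ⁿ⁾(x)| ≤ Cⁿ |x - x₀|ⁿ for all n and x ∈ [a,b]. -/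
open MeasureTheory Set

/-- `X̃⁽ⁿ⁾`: `X̃⁽⁰⁾ ≡ 1`, `X̃⁽ⁿ⁾(x) = n ∫_{x₀}^x X̃⁽ⁿ⁻¹⁾(s) (f²(s))^{(-1)^{n-1}} ds`. -/
noncomputable def Xt (f : ℝ → ℂ) (x₀ : ℝ) : ℕ → ℝ → ℂ
  | 0 => fun _ => 1
  | n + 1 => fun x => (n + 1 : ℂ) * ∫ s in x₀..x, Xt f x₀ n s * (f s ^ 2) ^ ((-1 : ℤ) ^ n)

/-- `X⁽ⁿ⁾`: `X⁽⁰⁾ ≡ 1`, `X⁽ⁿ⁾(x) = n ∫_{x₀}^x X⁽ⁿ⁻¹⁾(s) (f²(s))^{(-1)^n} ds`. -/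
noncomputable def Xo (f : ℝ → ℂ) (x₀ : ℝ) : ℕ → ℝ → ℂ
  | 0 => fun _ => 1
  | n + 1 => fun x => (n + 1 : ℂ) * ∫ s in x₀..x, Xo f x₀ n s * (f s ^ 2) ^ ((-1 : ℤ) ^ (n + 1))

/-- `ψ_k = X⁽ᵏ⁾` for `k` odd, `ψ_k = X̃⁽ᵏ⁾` for `k` even. -/
noncomputable def psi (f : ℝ → ℂ) (x₀ : ℝ) (k : ℕ) : ℝ → ℂ :=
  if Odd k then Xo f x₀ k else Xt f x₀ k

/-- Generalized derivatives: `γ₀(h) = h`, `γ_k(h) = φ^{(-1)^{k-1}} (γ_{k-1}(h))′`. -/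
noncomputable def gammaD (φ : ℝ → ℂ) : ℕ → (ℝ → ℂ) → ℝ → ℂ
  | 0, h => h
  | k + 1, h => fun x => φ x ^ ((-1 : ℤ) ^ k) * deriv (gammaD φ k h) x


lemma spps_key {x₀ x : ℝ} {g : ℝ → ℂ} {D : ℝ} (n : ℕ)
    (hg : IntervalIntegrable g volume x₀ x)
    (hb : ∀ s ∈ Set.uIoc x₀ x, ‖g s‖ ≤ D * |s - x₀| ^ n) :
    ‖∫ s in x₀..x, g s‖ ≤ D * (|x - x₀| ^ (n + 1) / (n + 1)) := by
  have hcont : Continuous fun s : ℝ => D * |s - x₀| ^ n :=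
    continuous_const.mul ((continuous_abs.comp (continuous_id.sub continuous_const)).pow n)
  have hpint : IntegrableOn (fun s => D * |s - x₀| ^ n) (Set.uIoc x₀ x) volume :=
    hcont.integrableOn_uIoc
  calc ‖∫ s in x₀..x, g s‖ ≤ ∫ s in Set.uIoc x₀ x, ‖g s‖ :=
        intervalIntegral.norm_integral_le_integral_norm_uIoc
    _ ≤ ∫ s in Set.uIoc x₀ x, D * |s - x₀| ^ n :=
        setIntegral_mono_on hg.def'.norm hpint measurableSet_uIoc hb
    _ = D * ∫ s in Set.uIoc x₀ x, |s - x₀| ^ n := by rw [integral_const_mul]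
    _ = D * (|x - x₀| ^ (n + 1) / (n + 1)) := by
        rw [integral_pow_abs_sub_uIoc]

lemma spps_gen {a b x₀ : ℝ} (hab : a ≤ b) (hx₀ : x₀ ∈ Set.Icc a b)
    (w : ℕ → ℝ → ℂ) (C : ℝ) (hC : 0 ≤ C)
    (hw : ∀ n, ContinuousOn (w n) (Set.Icc a b))
    (hwb : ∀ n, ∀ s ∈ Set.Icc a b, ‖w n s‖ ≤ C)
    (X : ℕ → ℝ → ℂ) (h0 : ∀ x, X 0 x = 1)
    (hs : ∀ n x, X (n + 1) x = (n + 1 : ℂ) * ∫ s in x₀..x, X n s * w n s) :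
    ∀ n, ContinuousOn (X n) (Set.Icc a b) ∧
      ∀ x ∈ Set.Icc a b, ‖X n x‖ ≤ C ^ n * |x - x₀| ^ n := by
  intro n
  induction n with
  | zero =>
      constructor
      · exact continuousOn_const.congr (fun x _ => h0 x)
      · intro x _; simp [h0 x]
  | succ n ih =>
      obtain ⟨ihc, ihb⟩ := ih
      have hGc : ContinuousOn (fun s => X n s * w n s) (Set.Icc a b) := ihc.mul (hw n)
      have hsub : ∀ x ∈ Set.Icc a b, Set.uIcc x₀ x ⊆ Set.Icc a b := fun x hx => by
        rw [← Set.uIcc_of_le hab]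
        exact Set.uIcc_subset_uIcc (by rwa [Set.uIcc_of_le hab]) (by rwa [Set.uIcc_of_le hab])
      have hint : ∀ x ∈ Set.Icc a b,
          IntervalIntegrable (fun s => X n s * w n s) MeasureTheory.volume x₀ x :=
        fun x hx => (hGc.mono (hsub x hx)).intervalIntegrable
      constructor
      · have hint_ab : IntervalIntegrable (fun s => X n s * w n s) MeasureTheory.volume a b := by
          apply ContinuousOn.intervalIntegrable
          rwa [Set.uIcc_of_le hab]
        have := intervalIntegral.continuousOn_primitive_interval'
          hint_ab (by rwa [Set.uIcc_of_le hab])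
        rw [Set.uIcc_of_le hab] at this
        exact (continuousOn_const.mul this).congr (fun x _ => hs n x)
      · intro x hx
        have hb' : ∀ s ∈ Set.uIoc x₀ x, ‖X n s * w n s‖ ≤ C ^ (n + 1) * |s - x₀| ^ n := by
          intro s hsm
          have hsI : s ∈ Set.Icc a b := hsub x hx (Set.uIoc_subset_uIcc hsm)
          calc ‖X n s * w n s‖ = ‖X n s‖ * ‖w n s‖ := norm_mul _ _
            _ ≤ (C ^ n * |s - x₀| ^ n) * C := by
                apply mul_le_mul (ihb s hsI) (hwb n s hsI) (norm_nonneg _)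
                positivity
            _ = C ^ (n + 1) * |s - x₀| ^ n := by ring
        have key := spps_key n (hint x hx) hb'
        rw [hs n x]
        rw [norm_mul]
        have hnn : ‖(n + 1 : ℂ)‖ = (n : ℝ) + 1 := by
          rw [show ((n : ℂ) + 1) = ((n + 1 : ℕ) : ℂ) by push_cast; ring, Complex.norm_natCast]
          push_cast; ring
        rw [hnn]
        calc ((n : ℝ) + 1) * ‖∫ s in x₀..x, X n s * w n s‖
            ≤ ((n : ℝ) + 1) * (C ^ (n + 1) * (|x - x₀| ^ (n + 1) / (n + 1))) := by
              apply mul_le_mul_of_nonneg_left key; positivity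
          _ = C ^ (n + 1) * |x - x₀| ^ (n + 1) := by
              field_simp

/-- Bounds on the recursive integrals and uniform convergence of the SPPS series. -/
theorem spps_series_uniform_convergence
    (a b x₀ : ℝ) (hab : a < b) (hx₀ : x₀ ∈ Set.Icc a b)
    (f : ℝ → ℂ)
    (hf : ContDiffOn ℝ 2 f (Set.Icc a b))
    (hf0 : ∀ x ∈ Set.Icc a b, f x ≠ 0) :
    ∃ C : ℝ, 0 ≤ C ∧
      (∀ (n : ℕ), ∀ x ∈ Set.Icc a b,
        ‖Xt f x₀ n x‖ ≤ C ^ n * |x - x₀| ^ n ∧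
        ‖Xo f x₀ n x‖ ≤ C ^ n * |x - x₀| ^ n) ∧
      (∀ lam : ℂ,
        TendstoUniformlyOn
          (fun (N : ℕ) (x : ℝ) => ∑ k ∈ Finset.range N,
            lam ^ k / (Nat.factorial (2 * k) : ℂ) * Xt f x₀ (2 * k) x)
          (fun x => ∑' k : ℕ, lam ^ k / (Nat.factorial (2 * k) : ℂ) * Xt f x₀ (2 * k) x)
          Filter.atTop (Set.Icc a b) ∧
        TendstoUniformlyOn
          (fun (N : ℕ) (x : ℝ) => ∑ k ∈ Finset.range N,
            lam ^ k / (Nat.factorial (2 * k + 1) : ℂ) * Xo f x₀ (2 * k + 1) x)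
          (fun x => ∑' k : ℕ, lam ^ k / (Nat.factorial (2 * k + 1) : ℂ) * Xo f x₀ (2 * k + 1) x)
          Filter.atTop (Set.Icc a b)) := by
  have hab' : a ≤ b := hab.le
  have hfc : ContinuousOn f (Set.Icc a b) := hf.continuousOn
  have h1 : ContinuousOn (fun s => f s ^ 2) (Set.Icc a b) := hfc.pow 2
  have h2 : ContinuousOn (fun s => (f s ^ 2)⁻¹) (Set.Icc a b) :=
    h1.inv₀ fun x hx => pow_ne_zero 2 (hf0 x hx)
  obtain ⟨M1, hM1⟩ := isCompact_Icc.exists_bound_of_continuousOn h1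
  obtain ⟨M2, hM2⟩ := isCompact_Icc.exists_bound_of_continuousOn h2
  set C : ℝ := max 0 (max M1 M2) with hCdef
  have hC : 0 ≤ C := le_max_left 0 _
  -- bound on the weights with an arbitrary sign
  have hwkey : ∀ (m : ℕ), ∀ s ∈ Set.Icc a b, ‖(f s ^ 2) ^ ((-1 : ℤ) ^ m)‖ ≤ C := by
    intro m s hs
    rcases Nat.even_or_odd m with h | h
    · rw [h.neg_one_pow, zpow_one]
      exact (hM1 s hs).trans (le_max_of_le_right (le_max_left _ _))
    · rw [h.neg_one_pow, zpow_neg_one]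
      exact (hM2 s hs).trans (le_max_of_le_right (le_max_right _ _))
  have hwcont : ∀ (m : ℕ), ContinuousOn (fun s => (f s ^ 2) ^ ((-1 : ℤ) ^ m)) (Set.Icc a b) := by
    intro m
    rcases Nat.even_or_odd m with h | h
    · simpa [h.neg_one_pow, zpow_one] using h1
    · simpa [h.neg_one_pow, zpow_neg_one] using h2
  have hXt := spps_gen hab' hx₀ (fun n s => (f s ^ 2) ^ ((-1 : ℤ) ^ n)) C hC
    (fun n => hwcont n) (fun n => hwkey n) (Xt f x₀) (fun _ => rfl) (fun n x => rfl)
  have hXo := spps_gen hab' hx₀ (fun n s => (f s ^ 2) ^ ((-1 : ℤ) ^ (n + 1))) C hC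
    (fun n => hwcont (n + 1)) (fun n => hwkey (n + 1)) (Xo f x₀) (fun _ => rfl) (fun n x => rfl)
  refine ⟨C, hC, fun n x hx => ⟨(hXt n).2 x hx, (hXo n).2 x hx⟩, fun lam => ?_⟩
  have hba : (0 : ℝ) ≤ b - a := by linarith
  set r : ℝ := ‖lam‖ * (C * (b - a)) ^ 2 with hrdef
  have hr : 0 ≤ r := by positivity
  have hxd : ∀ x ∈ Set.Icc a b, |x - x₀| ≤ b - a := by
    intro x hx
    rw [abs_sub_le_iff]
    exact ⟨by linarith [hx.2, hx₀.1], by linarith [hx.1, hx₀.2]⟩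
  have hXtb : ∀ k : ℕ, ∀ x ∈ Set.Icc a b, ‖Xt f x₀ k x‖ ≤ (C * (b - a)) ^ k := by
    intro k x hx
    refine ((hXt k).2 x hx).trans ?_
    rw [mul_pow]
    exact mul_le_mul_of_nonneg_left (pow_le_pow_left₀ (abs_nonneg _) (hxd x hx) k)
      (by positivity)
  have hXob : ∀ k : ℕ, ∀ x ∈ Set.Icc a b, ‖Xo f x₀ k x‖ ≤ (C * (b - a)) ^ k := by
    intro k x hx
    refine ((hXo k).2 x hx).trans ?_
    rw [mul_pow]
    exact mul_le_mul_of_nonneg_left (pow_le_pow_left₀ (abs_nonneg _) (hxd x hx) k)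
      (by positivity)
  constructor
  · apply tendstoUniformlyOn_tsum_nat (Real.summable_pow_div_factorial r)
    intro k x hx
    have hfact : ((Nat.factorial k : ℝ)) ≤ (Nat.factorial (2 * k) : ℝ) :=
      Nat.cast_le.2 (Nat.factorial_le (by omega))
    calc ‖lam ^ k / (Nat.factorial (2 * k) : ℂ) * Xt f x₀ (2 * k) x‖
        = ‖lam‖ ^ k / (Nat.factorial (2 * k) : ℝ) * ‖Xt f x₀ (2 * k) x‖ := by
          rw [norm_mul, norm_div, norm_pow, Complex.norm_natCast]
      _ ≤ ‖lam‖ ^ k / (Nat.factorial (2 * k) : ℝ) * (C * (b - a)) ^ (2 * k) :=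
          mul_le_mul_of_nonneg_left (hXtb (2 * k) x hx) (by positivity)
      _ = r ^ k / (Nat.factorial (2 * k) : ℝ) := by
          have hpow : (‖lam‖ * (C * (b - a)) ^ 2) ^ k
              = ‖lam‖ ^ k * (C * (b - a)) ^ (2 * k) := by
            rw [mul_pow, ← pow_mul, mul_comm 2 k]
          rw [hrdef, hpow]; ring
      _ ≤ r ^ k / (Nat.factorial k : ℝ) :=
          div_le_div_of_nonneg_left (by positivity)
            (by exact_mod_cast Nat.factorial_pos k) hfact
  · apply tendstoUniformlyOn_tsum_nat
      ((Real.summable_pow_div_factorial r).mul_left (C * (b - a)))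
    intro k x hx
    have hfact : ((Nat.factorial k : ℝ)) ≤ (Nat.factorial (2 * k + 1) : ℝ) :=
      Nat.cast_le.2 (Nat.factorial_le (by omega))
    calc ‖lam ^ k / (Nat.factorial (2 * k + 1) : ℂ) * Xo f x₀ (2 * k + 1) x‖
        = ‖lam‖ ^ k / (Nat.factorial (2 * k + 1) : ℝ) * ‖Xo f x₀ (2 * k + 1) x‖ := by
          rw [norm_mul, norm_div, norm_pow, Complex.norm_natCast]
      _ ≤ ‖lam‖ ^ k / (Nat.factorial (2 * k + 1) : ℝ) * (C * (b - a)) ^ (2 * k + 1) :=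
          mul_le_mul_of_nonneg_left (hXob (2 * k + 1) x hx) (by positivity)
      _ = (C * (b - a)) * (r ^ k / (Nat.factorial (2 * k + 1) : ℝ)) := by
          have hpow : (‖lam‖ * (C * (b - a)) ^ 2) ^ k
              = ‖lam‖ ^ k * (C * (b - a)) ^ (2 * k) := by
            rw [mul_pow, ← pow_mul, mul_comm 2 k]
          rw [hrdef, hpow, pow_succ]; ring
      _ ≤ (C * (b - a)) * (r ^ k / (Nat.factorial k : ℝ)) :=
          mul_le_mul_of_nonneg_left
            (div_le_div_of_nonneg_left (by positivity)
              (by exact_mod_cast Nat.factorial_pos k) hfact) (by positivity)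
end

section
/- Let a ∈ ℝ, a ≠ 0. The function y(x) = a x (c₁ e^{-a/x} - c₂ e^{a/x}) solves y″(x) - a² x⁻⁴ y(x) = 0 on (0,∞) for any constants c₁, c₂. -/
/-- `y(x) = a x (c₁ e^{-a/x} - c₂ e^{a/x})` solves `y″ - a² x⁻⁴ y = 0` on `(0,∞)`. -/
theorem kamke_example_solution
    (a c₁ c₂ : ℝ) (ha : a ≠ 0) :
    let y : ℝ → ℝ := fun x => a * x * (c₁ * Real.exp (-a / x) - c₂ * Real.exp (a / x))
    ∀ x : ℝ, 0 < x → deriv (deriv y) x - a ^ 2 / x ^ 4 * y x = 0 := by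
  intro y x hx
  set y' : ℝ → ℝ := fun t => a * (c₁ * Real.exp (-a / t) - c₂ * Real.exp (a / t))
      + a ^ 2 / t * (c₁ * Real.exp (-a / t) + c₂ * Real.exp (a / t)) with hy'def
  have he₁ : ∀ t : ℝ, t ≠ 0 →
      HasDerivAt (fun s : ℝ => Real.exp (-a / s)) (a / t ^ 2 * Real.exp (-a / t)) t := by
    intro t ht
    have h : HasDerivAt (fun s : ℝ => -a / s) (a / t ^ 2) t := by
      have := (hasDerivAt_inv ht).const_mul (-a)
      simpa [div_eq_mul_inv, mul_comm, mul_assoc] using this.congr_deriv (by field_simp)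
    simpa [mul_comm] using h.exp
  have he₂ : ∀ t : ℝ, t ≠ 0 →
      HasDerivAt (fun s : ℝ => Real.exp (a / s)) (-(a / t ^ 2) * Real.exp (a / t)) t := by
    intro t ht
    have h : HasDerivAt (fun s : ℝ => a / s) (-(a / t ^ 2)) t := by
      have := (hasDerivAt_inv ht).const_mul a
      simpa [div_eq_mul_inv, mul_comm, mul_assoc] using this.congr_deriv (by field_simp)
    simpa [mul_comm] using h.exp
  have hy : ∀ t : ℝ, t ≠ 0 → HasDerivAt y (y' t) t := by
    intro t ht
    have hg : HasDerivAt (fun s : ℝ => c₁ * Real.exp (-a / s) - c₂ * Real.exp (a / s))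
        (c₁ * (a / t ^ 2 * Real.exp (-a / t)) - c₂ * (-(a / t ^ 2) * Real.exp (a / t))) t :=
      (((he₁ t ht).const_mul c₁).sub ((he₂ t ht).const_mul c₂))
    have hax : HasDerivAt (fun s : ℝ => a * s) a t := by
      simpa using (hasDerivAt_id t).const_mul a
    have := hax.mul hg
    refine this.congr_deriv ?_
    rw [hy'def]
    field_simp
    ring
  have hy' : ∀ t : ℝ, t ≠ 0 → HasDerivAt y' (a ^ 2 / t ^ 4 * y t) t := by
    intro t ht
    have hg : HasDerivAt (fun s : ℝ => c₁ * Real.exp (-a / s) - c₂ * Real.exp (a / s))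
        (c₁ * (a / t ^ 2 * Real.exp (-a / t)) - c₂ * (-(a / t ^ 2) * Real.exp (a / t))) t :=
      (((he₁ t ht).const_mul c₁).sub ((he₂ t ht).const_mul c₂))
    have hh : HasDerivAt (fun s : ℝ => c₁ * Real.exp (-a / s) + c₂ * Real.exp (a / s))
        (c₁ * (a / t ^ 2 * Real.exp (-a / t)) + c₂ * (-(a / t ^ 2) * Real.exp (a / t))) t :=
      (((he₁ t ht).const_mul c₁).add ((he₂ t ht).const_mul c₂))
    have hq : HasDerivAt (fun s : ℝ => a ^ 2 / s) (-(a ^ 2 / t ^ 2)) t := by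
      have := (hasDerivAt_inv ht).const_mul (a ^ 2)
      simpa [div_eq_mul_inv, mul_comm, mul_assoc] using this.congr_deriv (by field_simp)
    have := (hg.const_mul a).add (hq.mul hh)
    refine this.congr_deriv ?_
    show _ = a ^ 2 / t ^ 4 * (a * t * (c₁ * Real.exp (-a / t) - c₂ * Real.exp (a / t)))
    field_simp
    ring
  have hEq : Set.EqOn (deriv y) y' (Set.Ioi (0 : ℝ)) := fun t ht =>
    (hy t (ne_of_gt ht)).deriv
  have h2 : deriv (deriv y) x = deriv y' x :=
    Filter.EventuallyEq.deriv_eq (hEq.eventuallyEq_of_mem (isOpen_Ioi.mem_nhds hx))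
  rw [h2, (hy' x hx.ne').deriv]
  ring
end

section
/- Let f ∈ C¹[a,b] be nonvanishing on [a,b] and let X̃⁽ⁿ⁾, X⁽ⁿ⁾ be the recursive integrals based at x₀ ∈ [a,b]. Then the identity (f X̃⁽²ᵏ⁾)″ + q (f X̃⁽²ᵏ⁾) = 2k(2k-1) f X̃⁽²ᵏ⁻²⁾ holds on (a,b) for k ≥ 1, where q = -f″/f and f ∈ C² on (a,b). -/
/-!
Differentiating the recursion gives `X̃⁽²ᵏ⁾′ = 2k X̃⁽²ᵏ⁻¹⁾ / f²` and `X̃⁽²ᵏ⁻¹⁾′ = (2k-1) X̃⁽²ᵏ⁻²⁾ f²`.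
Hence `(f X̃⁽²ᵏ⁾)′ = f′ X̃⁽²ᵏ⁾ + 2k X̃⁽²ᵏ⁻¹⁾ / f`, and in the second derivative the two terms
`± 2k f′ X̃⁽²ᵏ⁻¹⁾ / f²` cancel, leaving `f″ X̃⁽²ᵏ⁾ + 2k(2k-1) f X̃⁽²ᵏ⁻²⁾`; the potential
`q = -f″/f` removes the first summand.
-/

open MeasureTheory Set

section Primitive

variable {a b x₀ : ℝ} {g : ℝ → ℂ}

theorem continuousOn_primitive_Icc (hg : ContinuousOn g (Icc a b)) (hx₀ : x₀ ∈ Icc a b) :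
    ContinuousOn (fun x => ∫ s in x₀..x, g s) (Icc a b) := by
  have hab : a ≤ b := hx₀.1.trans hx₀.2
  rw [← uIcc_of_le hab] at hg hx₀ ⊢
  exact intervalIntegral.continuousOn_primitive_interval' hg.intervalIntegrable hx₀

theorem hasDerivAt_primitive_Ioo (hg : ContinuousOn g (Icc a b)) (hx₀ : x₀ ∈ Icc a b)
    {x : ℝ} (hx : x ∈ Ioo a b) :
    HasDerivAt (fun x => ∫ s in x₀..x, g s) (g x) x := by
  have hxI : x ∈ Icc a b := Ioo_subset_Icc_self hx
  exact intervalIntegral.integral_hasDerivAt_right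
    ((hg.mono (uIcc_subset_Icc hx₀ hxI)).intervalIntegrable)
    ((hg.mono Ioo_subset_Icc_self).stronglyMeasurableAtFilter isOpen_Ioo x hx)
    ((hg x hxI).continuousAt (Icc_mem_nhds hx.1 hx.2))

end Primitive

section RecursiveIntegrals

variable {a b x₀ : ℝ} {f : ℝ → ℂ}

theorem ContinuousOn.sq_zpow {s : Set ℝ} (hf : ContinuousOn f s) (hf0 : ∀ x ∈ s, f x ≠ 0)
    (m : ℤ) : ContinuousOn (fun x => (f x ^ 2) ^ m) s :=
  (hf.pow 2).zpow₀ m fun x hx => Or.inl (pow_ne_zero 2 (hf0 x hx))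

theorem continuousOn_Xt (hx₀ : x₀ ∈ Icc a b) (hf : ContinuousOn f (Icc a b))
    (hf0 : ∀ x ∈ Icc a b, f x ≠ 0) (n : ℕ) : ContinuousOn (Xt f x₀ n) (Icc a b) := by
  induction n with
  | zero => exact continuousOn_const
  | succ n ih =>
    exact continuousOn_const.mul
      (continuousOn_primitive_Icc (ih.mul (hf.sq_zpow hf0 _)) hx₀)

theorem hasDerivAt_Xt_succ (hx₀ : x₀ ∈ Icc a b) (hf : ContinuousOn f (Icc a b))
    (hf0 : ∀ x ∈ Icc a b, f x ≠ 0) (n : ℕ) {x : ℝ} (hx : x ∈ Ioo a b) :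
    HasDerivAt (Xt f x₀ (n + 1))
      ((n + 1 : ℂ) * (Xt f x₀ n x * (f x ^ 2) ^ ((-1 : ℤ) ^ n))) x :=
  (hasDerivAt_primitive_Ioo ((continuousOn_Xt hx₀ hf hf0 n).mul (hf.sq_zpow hf0 _))
    hx₀ hx).const_mul _

theorem hasDerivAt_Xt_two_mul_add_one (hx₀ : x₀ ∈ Icc a b) (hf : ContinuousOn f (Icc a b))
    (hf0 : ∀ x ∈ Icc a b, f x ≠ 0) (m : ℕ) {x : ℝ} (hx : x ∈ Ioo a b) :
    HasDerivAt (Xt f x₀ (2 * m + 1))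
      ((2 * m + 1 : ℂ) * (Xt f x₀ (2 * m) x * f x ^ 2)) x := by
  simpa [Even.neg_one_pow ⟨m, two_mul m⟩] using hasDerivAt_Xt_succ hx₀ hf hf0 (2 * m) hx

theorem hasDerivAt_Xt_two_mul_add_two (hx₀ : x₀ ∈ Icc a b) (hf : ContinuousOn f (Icc a b))
    (hf0 : ∀ x ∈ Icc a b, f x ≠ 0) (m : ℕ) {x : ℝ} (hx : x ∈ Ioo a b) :
    HasDerivAt (Xt f x₀ (2 * m + 2))
      ((2 * m + 2 : ℂ) * (Xt f x₀ (2 * m + 1) x * (f x ^ 2)⁻¹)) x := by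
  have h := hasDerivAt_Xt_succ hx₀ hf hf0 (2 * m + 1) hx
  rw [Odd.neg_one_pow ⟨m, rfl⟩, zpow_neg_one] at h
  convert h using 2
  push_cast
  ring

end RecursiveIntegrals

theorem deriv_deriv_mul_eq_of_hasDerivAt {U : Set ℝ} (hU : IsOpen U) {f X Y Z : ℝ → ℂ}
    {c d : ℂ} {x : ℝ} (hx : x ∈ U) (hf : ContDiffOn ℝ 2 f U) (hf0 : ∀ y ∈ U, f y ≠ 0)
    (hX : ∀ y ∈ U, HasDerivAt X (c * (Y y * (f y ^ 2)⁻¹)) y)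
    (hY : HasDerivAt Y (d * (Z x * f x ^ 2)) x) :
    deriv (deriv fun y => f y * X y) x = deriv (deriv f) x * X x + c * d * f x * Z x := by
  have hf' : ∀ y ∈ U, HasDerivAt f (deriv f y) y := fun y hy =>
    ((hf.differentiableOn two_ne_zero).differentiableAt (hU.mem_nhds hy)).hasDerivAt
  have hf'' : HasDerivAt (deriv f) (deriv (deriv f) x) x :=
    (((hf.deriv_of_isOpen hU (by norm_num : (1 : WithTop ℕ∞) + 1 ≤ 2)).differentiableOn
      one_ne_zero).differentiableAt (hU.mem_nhds hx)).hasDerivAt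
  have hfx : f x ≠ 0 := hf0 x hx
  set v : ℝ → ℂ := fun y => deriv f y * X y + c * Y y * (f y)⁻¹
  have hderiv : deriv (fun y => f y * X y) =ᶠ[nhds x] v := by
    filter_upwards [hU.mem_nhds hx] with y hy
    rw [deriv_fun_mul (hf' y hy).differentiableAt (hX y hy).differentiableAt,
      (hf' y hy).deriv, (hX y hy).deriv]
    simp only [v]
    field_simp [hf0 y hy]
  have hv : HasDerivAt v (deriv (deriv f) x * X x + deriv f x * (c * (Y x * (f x ^ 2)⁻¹)) +
      (c * (d * (Z x * f x ^ 2)) * (f x)⁻¹ + c * Y x * (-(f x ^ 2)⁻¹ * deriv f x))) x :=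
    (hf''.mul (hX x hx)).add ((hY.const_mul c).mul ((hasDerivAt_inv hfx).comp x (hf' x hx)))
  rw [hderiv.deriv_eq, hv.deriv]
  field_simp
  ring

theorem termwise_identity_Xt_general
    (a b x₀ : ℝ) (hx₀ : x₀ ∈ Set.Icc a b)
    (f : ℝ → ℂ)
    (hf1 : ContDiffOn ℝ 1 f (Set.Icc a b))
    (hf2 : ContDiffOn ℝ 2 f (Set.Ioo a b))
    (hf0 : ∀ x ∈ Set.Icc a b, f x ≠ 0) :
    ∀ k : ℕ, 1 ≤ k → ∀ x ∈ Set.Ioo a b,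
      deriv (deriv (fun y => f y * Xt f x₀ (2 * k) y)) x +
        (-(deriv (deriv f) x) / f x) * (f x * Xt f x₀ (2 * k) x) =
      (2 * k : ℂ) * (2 * k - 1 : ℂ) * f x * Xt f x₀ (2 * k - 2) x := by
  intro k hk x hx
  obtain ⟨m, rfl⟩ : ∃ m, k = m + 1 := ⟨k - 1, by omega⟩
  rw [show 2 * (m + 1) = 2 * m + 2 by ring, show 2 * m + 2 - 2 = 2 * m by omega]
  have hf := hf1.continuousOn
  have hf0' : ∀ y ∈ Ioo a b, f y ≠ 0 := fun y hy => hf0 y (Ioo_subset_Icc_self hy)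
  rw [deriv_deriv_mul_eq_of_hasDerivAt isOpen_Ioo hx hf2 hf0'
    (fun y hy => hasDerivAt_Xt_two_mul_add_two hx₀ hf hf0 m hy)
    (hasDerivAt_Xt_two_mul_add_one hx₀ hf hf0 m hx)]
  field_simp [hf0' x hx]
  push_cast
  ring

/-- Termwise identity: `(f X̃⁽²ᵏ⁾)″ + q (f X̃⁽²ᵏ⁾) = 2k(2k-1) f X̃⁽²ᵏ⁻²⁾` on `(a,b)`. -/
theorem termwise_identity_Xt
    (a b x₀ : ℝ) (hab : a < b) (hx₀ : x₀ ∈ Set.Icc a b)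
    (f : ℝ → ℂ)
    (hf1 : ContDiffOn ℝ 1 f (Set.Icc a b))
    (hf2 : ContDiffOn ℝ 2 f (Set.Ioo a b))
    (hf0 : ∀ x ∈ Set.Icc a b, f x ≠ 0) :
    ∀ k : ℕ, 1 ≤ k → ∀ x ∈ Set.Ioo a b,
      deriv (deriv (fun y => f y * Xt f x₀ (2 * k) y)) x +
        (-(deriv (deriv f) x) / f x) * (f x * Xt f x₀ (2 * k) x) =
      (2 * k : ℂ) * (2 * k - 1 : ℂ) * f x * Xt f x₀ (2 * k - 2) x :=
  termwise_identity_Xt_general a b x₀ hx₀ f hf1 hf2 hf0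
end

section
/- Let f ∈ C¹[a,b] be nonvanishing with f ∈ C² on (a,b), let q = -f″/f, and let X⁽ⁿ⁾ be the recursive integrals based at x₀. Then for k ≥ 1, (f X⁽²ᵏ⁺¹⁾)″ + q (f X⁽²ᵏ⁺¹⁾) = (2k+1)(2k) f X⁽²ᵏ⁻¹⁾ on (a,b). -/
open MeasureTheory Set

open scoped Topology

section Aux

variable {f : ℝ → ℂ} {a b x₀ : ℝ}

private lemma integrand_contOn (hfc : ContinuousOn f (Set.Icc a b))
    (hf0 : ∀ x ∈ Set.Icc a b, f x ≠ 0) {X : ℝ → ℂ} (hX : ContinuousOn X (Set.Icc a b)) (e : ℤ) :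
    ContinuousOn (fun s => X s * (f s ^ 2) ^ e) (Set.Icc a b) :=
  hX.mul ((hfc.pow 2).zpow₀ e fun x hx => Or.inl (pow_ne_zero 2 (hf0 x hx)))

private lemma Xo_contOn (hab : a ≤ b) (hx₀ : x₀ ∈ Set.Icc a b)
    (hfc : ContinuousOn f (Set.Icc a b)) (hf0 : ∀ x ∈ Set.Icc a b, f x ≠ 0) :
    ∀ n, ContinuousOn (Xo f x₀ n) (Set.Icc a b) := by
  intro n
  induction n with
  | zero => exact continuousOn_const
  | succ n ih =>
    have hg := integrand_contOn hfc hf0 ih ((-1 : ℤ) ^ (n + 1))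
    have hint : IntervalIntegrable
        (fun s => Xo f x₀ n s * (f s ^ 2) ^ ((-1 : ℤ) ^ (n + 1))) volume a b :=
      (hg.mono (by rw [Set.uIcc_of_le hab])).intervalIntegrable
    have hprim := intervalIntegral.continuousOn_primitive_interval' hint
      (by rwa [Set.uIcc_of_le hab])
    rw [Set.uIcc_of_le hab] at hprim
    exact continuousOn_const.mul hprim

private lemma Xo_hasDerivAt (hab : a ≤ b) (hx₀ : x₀ ∈ Set.Icc a b)
    (hfc : ContinuousOn f (Set.Icc a b)) (hf0 : ∀ x ∈ Set.Icc a b, f x ≠ 0)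
    (n : ℕ) {x : ℝ} (hx : x ∈ Set.Ioo a b) :
    HasDerivAt (Xo f x₀ (n + 1))
      ((n + 1 : ℂ) * (Xo f x₀ n x * (f x ^ 2) ^ ((-1 : ℤ) ^ (n + 1)))) x := by
  set g : ℝ → ℂ := fun s => Xo f x₀ n s * (f s ^ 2) ^ ((-1 : ℤ) ^ (n + 1)) with hgdef
  have hgc : ContinuousOn g (Set.Icc a b) :=
    integrand_contOn hfc hf0 (Xo_contOn hab hx₀ hfc hf0 n) _
  have hgo : ContinuousOn g (Set.Ioo a b) := hgc.mono Set.Ioo_subset_Icc_self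
  have hca : ContinuousAt g x :=
    hgo.continuousAt (isOpen_Ioo.mem_nhds hx)
  have hint : IntervalIntegrable g volume x₀ x :=
    (hgc.mono (Set.uIcc_subset_Icc hx₀ (Set.Ioo_subset_Icc_self hx))).intervalIntegrable
  have hmeas : StronglyMeasurableAtFilter g (𝓝 x) volume :=
    hgo.stronglyMeasurableAtFilter isOpen_Ioo x hx
  have h := (intervalIntegral.integral_hasDerivAt_right hint hmeas hca).const_mul (n + 1 : ℂ)
  exact h

end Aux

/-- Termwise identity: `(f X⁽²ᵏ⁺¹⁾)″ + q (f X⁽²ᵏ⁺¹⁾) = (2k+1)(2k) f X⁽²ᵏ⁻¹⁾` on `(a,b)`. -/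
theorem termwise_identity_Xo
    (a b x₀ : ℝ) (hab : a < b) (hx₀ : x₀ ∈ Set.Icc a b)
    (f : ℝ → ℂ)
    (hf1 : ContDiffOn ℝ 1 f (Set.Icc a b))
    (hf2 : ContDiffOn ℝ 2 f (Set.Ioo a b))
    (hf0 : ∀ x ∈ Set.Icc a b, f x ≠ 0) :
    ∀ k : ℕ, 1 ≤ k → ∀ x ∈ Set.Ioo a b,
      deriv (deriv (fun y => f y * Xo f x₀ (2 * k + 1) y)) x +
        (-(deriv (deriv f) x) / f x) * (f x * Xo f x₀ (2 * k + 1) x) =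
      (2 * k + 1 : ℂ) * (2 * k : ℂ) * f x * Xo f x₀ (2 * k - 1) x := by
  intro k hk x hx
  obtain ⟨m, rfl⟩ : ∃ m, k = m + 1 := ⟨k - 1, by omega⟩
  have hfc : ContinuousOn f (Set.Icc a b) := hf1.continuousOn
  have hable : a ≤ b := hab.le
  -- index bookkeeping
  have hidx1 : 2 * (m + 1) + 1 = (2 * m + 2) + 1 := by ring
  have hidx2 : 2 * (m + 1) = (2 * m + 1) + 1 := by ring
  have hidx3 : 2 * (m + 1) - 1 = 2 * m + 1 := by omega
  set X : ℝ → ℂ := Xo f x₀ (2 * m + 3) with hX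
  set Y : ℝ → ℂ := Xo f x₀ (2 * m + 2) with hYdef
  set Z : ℝ → ℂ := Xo f x₀ (2 * m + 1) with hZ
  have hexpodd : ((-1 : ℤ)) ^ (2 * m + 2 + 1) = -1 := Odd.neg_one_pow ⟨m + 1, by ring⟩
  have hexpeven : ((-1 : ℤ)) ^ (2 * m + 1 + 1) = 1 := Even.neg_one_pow ⟨m + 1, by ring⟩
  -- derivatives of X and Y at any point of (a,b)
  have hXd : ∀ y ∈ Set.Ioo a b,
      HasDerivAt X ((2 * m + 3 : ℂ) * (Y y * (f y ^ 2)⁻¹)) y := by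
    intro y hy
    have h := Xo_hasDerivAt hable hx₀ hfc hf0 (2 * m + 2) hy
    rw [hexpodd, zpow_neg_one] at h
    convert h using 2 <;> push_cast <;> ring_nf
  have hYd : ∀ y ∈ Set.Ioo a b,
      HasDerivAt Y ((2 * m + 2 : ℂ) * (Z y * f y ^ 2)) y := by
    intro y hy
    have h := Xo_hasDerivAt hable hx₀ hfc hf0 (2 * m + 1) hy
    rw [hexpeven, zpow_one] at h
    convert h using 2 <;> push_cast <;> ring_nf
  -- derivatives of f
  have hfd : ∀ y ∈ Set.Ioo a b, HasDerivAt f (deriv f y) y := by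
    intro y hy
    exact (((hf2.differentiableOn (by norm_num)).differentiableAt
      (isOpen_Ioo.mem_nhds hy))).hasDerivAt
  have hdf1 : ContDiffOn ℝ 1 (deriv f) (Set.Ioo a b) :=
    hf2.deriv_of_isOpen isOpen_Ioo (by norm_num)
  have hdfd : HasDerivAt (deriv f) (deriv (deriv f) x) x :=
    ((hdf1.differentiableOn one_ne_zero).differentiableAt (isOpen_Ioo.mem_nhds hx)).hasDerivAt
  -- first derivative of u = f * X, as a function F on (a,b)
  set F : ℝ → ℂ := fun y => deriv f y * X y + (2 * m + 3 : ℂ) * (Y y / f y) with hF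
  have hu : ∀ y ∈ Set.Ioo a b,
      HasDerivAt (fun y => f y * X y) (F y) y := by
    intro y hy
    have hy' : f y ≠ 0 := hf0 y (Set.Ioo_subset_Icc_self hy)
    have h := (hfd y hy).mul (hXd y hy)
    convert h using 1
    show deriv f y * X y + (2 * m + 3 : ℂ) * (Y y / f y) = _
    field_simp
    all_goals rfl
  have hidx : 2 * (m + 1) + 1 = 2 * m + 3 := by ring
  rw [hidx, hidx3]
  have hderiv1 : deriv (fun y => f y * X y) =ᶠ[𝓝 x] F :=
    Filter.eventuallyEq_of_mem (isOpen_Ioo.mem_nhds hx) fun y hy => (hu y hy).deriv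
  have hdd : deriv (deriv (fun y => f y * X y)) x = deriv F x := hderiv1.deriv_eq
  -- second derivative
  have hx' : f x ≠ 0 := hf0 x (Set.Ioo_subset_Icc_self hx)
  have hFd : HasDerivAt F
      (deriv (deriv f) x * X x + deriv f x * ((2 * m + 3 : ℂ) * (Y x * (f x ^ 2)⁻¹)) +
        (2 * m + 3 : ℂ) * (((2 * m + 2 : ℂ) * (Z x * f x ^ 2) * f x - Y x * deriv f x) /
          f x ^ 2)) x :=
    (hdfd.mul (hXd x hx)).add
      (((hYd x hx).div (hfd x hx) hx').const_mul (2 * m + 3 : ℂ))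
  rw [hdd, hFd.deriv]
  simp only [hX, hYdef, hZ]
  push_cast
  field_simp
  ring
end
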